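/- arXiv:1901.00963 — 7 statements merged into one kernel-verified Lean document; each statement's English description precedes it below -/
import Mathlib

section
/- Let f : ℕ × ℕ × {0,1} → ℝ be a nonnegative function belonging to the class ℱ. Then for all x ≥ 1 and all q₁ ∈ ℕ, 2·f(x,q₁,1) ≤ f(x+1,q₁,1) + f(x−1,q₁,1) (i.e., f(·,q₁,1) is convex in its first argument). -/
/-- The class ℱ of functions `f : ℕ × ℕ × {0,1} → ℝ` (with `l₂ : Fin 2`)
satisfying the nine properties (F1)–(F9) together with nonnegativity. -/
structure InClassF (f : ℕ → ℕ → Fin 2 → ℝ) : Prop where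
  nonneg : ∀ x q₁ l₂, 0 ≤ f x q₁ l₂
  F1 : ∀ x q₁, f (x+1) q₁ 0 + f (x+1) q₁ 1 ≤ f x q₁ 1 + f (x+2) q₁ 0
  F2 : ∀ x q₁, f (x+1) q₁ 0 + f x (q₁+1) 1 ≤ f x q₁ 1 + f (x+1) (q₁+1) 0
  F3 : ∀ q₁, f 0 (q₁+1) 0 + f 0 (q₁+1) 1 ≤ f 0 q₁ 1 + f 0 (q₁+2) 0
  F4 : ∀ x q₁ l₂, f x (q₁+1) l₂ ≤ f (x+1) q₁ l₂
  F5 : ∀ x q₁, f x q₁ 1 + f (x+1) q₁ 0 ≤ f x q₁ 0 + f (x+1) q₁ 1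
  F6 : ∀ x q₁, f x q₁ 1 + f x (q₁+1) 0 ≤ f x q₁ 0 + f x (q₁+1) 1
  F7 : ∀ x q₁ l₂, f x q₁ l₂ ≤ f (x+1) q₁ l₂
  F8 : ∀ x q₁ l₂, f x q₁ l₂ ≤ f x (q₁+1) l₂
  F9 : ∀ x q₁, f x q₁ 0 ≤ f x q₁ 1

theorem InClassF.two_mul_le_add {f : ℕ → ℕ → Fin 2 → ℝ} (hf : InClassF f) (x q₁ : ℕ) :
    2 * f (x + 1) q₁ 1 ≤ f (x + 2) q₁ 1 + f x q₁ 1 := by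
  linarith [hf.F1 x q₁, hf.F5 (x + 1) q₁]

theorem stmt_0 (f : ℕ → ℕ → Fin 2 → ℝ) (hf : InClassF f) :
    ∀ x q₁ : ℕ, 1 ≤ x → 2 * f x q₁ 1 ≤ f (x + 1) q₁ 1 + f (x - 1) q₁ 1 := by
  intro x q₁ hx
  obtain ⟨y, rfl⟩ := Nat.exists_eq_add_of_le' hx
  rw [Nat.add_sub_cancel]
  exact hf.two_mul_le_add y q₁
end

section
/- Let f : ℕ × ℕ × {0,1} → ℝ be a nonnegative function belonging to the class ℱ. Then for all q₁ ≥ 1, 2·f(0,q₁,1) ≤ f(0,q₁+1,1) + f(0,q₁−1,1) (i.e., f(0,·,1) is convex in its second argument). -/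
theorem InClassF.two_mul_le_add_succ {f : ℕ → ℕ → Fin 2 → ℝ} (hf : InClassF f) (q : ℕ) :
    2 * f 0 (q + 1) 1 ≤ f 0 (q + 2) 1 + f 0 q 1 := by
  linarith [hf.F3 q, hf.F6 0 (q + 1)]

theorem stmt_2 (f : ℕ → ℕ → Fin 2 → ℝ) (hf : InClassF f) :
    ∀ q₁ : ℕ, 1 ≤ q₁ → 2 * f 0 q₁ 1 ≤ f 0 (q₁ + 1) 1 + f 0 (q₁ - 1) 1 := by
  rintro (_ | q) hq
  · omega
  · exact hf.two_mul_le_add_succ q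
end

section
/- Let f : ℕ × ℕ × {0,1} → ℝ be a nonnegative function belonging to the class ℱ. Then for all x, q₁ ∈ ℕ, 2·f(x+1,q₁,0) ≤ f(x+2,q₁,0) + f(x,q₁,0) (i.e., f(·,q₁,0) is convex in its first argument). -/
theorem stmt_3 (f : ℕ → ℕ → Fin 2 → ℝ) (hf : InClassF f) :
    ∀ x q₁ : ℕ, 2 * f (x + 1) q₁ 0 ≤ f (x + 2) q₁ 0 + f x q₁ 0 :=
  fun x q₁ => by linarith [hf.F1 x q₁, hf.F5 x q₁]
end

section
/- Let f : ℕ × ℕ × {0,1} → ℝ be a nonnegative function belonging to the class ℱ. Then for all x, q₁ ∈ ℕ, f(x+1,q₁,0) + f(x,q₁+1,0) ≤ f(x+1,q₁+1,0) + f(x,q₁,0) (submodularity of f(·,·,0) in its first two arguments). -/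
theorem stmt_7 (f : ℕ → ℕ → Fin 2 → ℝ) (hf : InClassF f) :
    ∀ x q₁ : ℕ, f (x + 1) q₁ 0 + f x (q₁ + 1) 0 ≤ f (x + 1) (q₁ + 1) 0 + f x q₁ 0 :=
  fun x q₁ => by linarith [hf.F2 x q₁, hf.F6 x q₁]
end

section
/- Let J : ℕ × ℕ × {0,1} → ℝ be a nonnegative function belonging to the class ℱ, and let T be the intermediate-value function obtained from J. Then T satisfies property (F4): for all x, q₁ ∈ ℕ and l₂ ∈ {0,1}, T(x,q₁+1,l₂) ≤ T(x+1,q₁,l₂). -/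
/-- The intermediate-value function `T` obtained from `J`:
`T(x,q₁,1) = J(x,q₁,1)`, `T(0,0,0) = J(0,0,0)`,
`T(x,q₁,0) = min{J(x,q₁,0), J(x−1,q₁,1)}` for `x ≥ 1`, and
`T(0,q₁,0) = min{J(0,q₁,0), J(0,q₁−1,1)}` for `q₁ ≥ 1`. -/
noncomputable def interT (J : ℕ → ℕ → Fin 2 → ℝ) : ℕ → ℕ → Fin 2 → ℝ :=
  fun x q₁ l₂ =>
    if l₂ = (1 : Fin 2) then J x q₁ 1
    else
      match x, q₁ with
      | 0, 0 => J 0 0 0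
      | x' + 1, q' => min (J (x' + 1) q' 0) (J x' q' 1)
      | 0, q' + 1 => min (J 0 (q' + 1) 0) (J 0 q' 1)

theorem interT_succ_zero (J : ℕ → ℕ → Fin 2 → ℝ) (x q₁ : ℕ) :
    interT J (x + 1) q₁ 0 = min (J (x + 1) q₁ 0) (J x q₁ 1) := rfl

theorem interT_zero_succ_zero (J : ℕ → ℕ → Fin 2 → ℝ) (q₁ : ℕ) :
    interT J 0 (q₁ + 1) 0 = min (J 0 (q₁ + 1) 0) (J 0 q₁ 1) := rfl

theorem interT_shift_le_of_shift_le {J : ℕ → ℕ → Fin 2 → ℝ}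
    (hJ : ∀ x q₁ l₂, J x (q₁ + 1) l₂ ≤ J (x + 1) q₁ l₂) (x q₁ : ℕ) (l₂ : Fin 2) :
    interT J x (q₁ + 1) l₂ ≤ interT J (x + 1) q₁ l₂ := by
  match x, l₂ with
  | 0, 0 =>
    rw [interT_zero_succ_zero, interT_succ_zero]
    exact min_le_min_right _ (hJ 0 q₁ 0)
  | x + 1, 0 =>
    rw [interT_succ_zero, interT_succ_zero]
    exact min_le_min (hJ (x + 1) q₁ 0) (hJ x q₁ 1)
  | x, 1 => exact hJ x q₁ 1

theorem stmt_9 (J : ℕ → ℕ → Fin 2 → ℝ) (hJ : InClassF J) :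
    ∀ (x q₁ : ℕ) (l₂ : Fin 2), interT J x (q₁ + 1) l₂ ≤ interT J (x + 1) q₁ l₂ :=
  interT_shift_le_of_shift_le hJ.F4
end

section
/- Let J : ℕ × ℕ × {0,1} → ℝ be a nonnegative function belonging to the class ℱ, and let T be the intermediate-value function obtained from J. Then T satisfies the monotonicity properties (F7)–(F9): for all x, q₁ ∈ ℕ and l₂ ∈ {0,1}, T(x,q₁,l₂) ≤ T(x+1,q₁,l₂), T(x,q₁,l₂) ≤ T(x,q₁+1,l₂), and T(x,q₁,0) ≤ T(x,q₁,1). -/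
namespace interT

variable {J : ℕ → ℕ → Fin 2 → ℝ}

theorem succ_zero (x q : ℕ) : interT J (x + 1) q 0 = min (J (x + 1) q 0) (J x q 1) := rfl

theorem zero_succ_zero (q : ℕ) : interT J 0 (q + 1) 0 = min (J 0 (q + 1) 0) (J 0 q 1) := rfl

theorem apply_zero_le (x q : ℕ) : interT J x q 0 ≤ J x q 0 := by
  rcases x with _ | x
  · rcases q with _ | q
    · exact le_rfl
    · exact min_le_left _ _
  · exact min_le_left _ _

theorem le_succ_left (hx : ∀ x q l, J x q l ≤ J (x + 1) q l) (h01 : ∀ x q, J x q 0 ≤ J x q 1)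
    (x q : ℕ) (l : Fin 2) : interT J x q l ≤ interT J (x + 1) q l := by
  match l with
  | 0 =>
    rw [succ_zero]
    exact le_min ((apply_zero_le x q).trans (hx x q 0)) ((apply_zero_le x q).trans (h01 x q))
  | 1 => exact hx x q 1

theorem le_succ_right (hq : ∀ x q l, J x q l ≤ J x (q + 1) l) (h01 : ∀ x q, J x q 0 ≤ J x q 1)
    (x q : ℕ) (l : Fin 2) : interT J x q l ≤ interT J x (q + 1) l := by
  match x, l with
  | 0, 0 =>
    rw [zero_succ_zero]
    exact le_min ((apply_zero_le 0 q).trans (hq 0 q 0)) ((apply_zero_le 0 q).trans (h01 0 q))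
  | x + 1, 0 =>
    rw [succ_zero, succ_zero]
    exact min_le_min (hq _ q 0) (hq x q 1)
  | x, 1 => exact hq x q 1

theorem apply_zero_le_apply_one (h01 : ∀ x q, J x q 0 ≤ J x q 1) (x q : ℕ) :
    interT J x q 0 ≤ interT J x q 1 :=
  (apply_zero_le x q).trans (h01 x q)

end interT

theorem stmt_12 (J : ℕ → ℕ → Fin 2 → ℝ) (hJ : InClassF J) :
    (∀ (x q₁ : ℕ) (l₂ : Fin 2), interT J x q₁ l₂ ≤ interT J (x + 1) q₁ l₂) ∧
    (∀ (x q₁ : ℕ) (l₂ : Fin 2), interT J x q₁ l₂ ≤ interT J x (q₁ + 1) l₂) ∧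
    (∀ x q₁ : ℕ, interT J x q₁ 0 ≤ interT J x q₁ 1) :=
  ⟨interT.le_succ_left hJ.F7 hJ.F9, interT.le_succ_right hJ.F8 hJ.F9,
    interT.apply_zero_le_apply_one hJ.F9⟩
end

section
/- (Threshold structure along each line, from Lemma 2 of the paper.) Let f : ℕ × ℕ × {0,1} → ℝ be a nonnegative function belonging to the class ℱ. Then for every fixed q₁ ∈ ℕ, the set {x ∈ ℕ : f(x,q₁,1) ≤ f(x+1,q₁,0)} is upward closed; equivalently, there exists a threshold m ∈ ℕ ∪ {∞} such that adding a packet to the sub-6 GHz server is no more costly than not adding one (f(x,q₁,1) ≤ f(x+1,q₁,0)) precisely when x ≥ m. -/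
theorem InClassF.antitone_marginal {f : ℕ → ℕ → Fin 2 → ℝ} (hf : InClassF f) (q₁ : ℕ) :
    Antitone fun x => f x q₁ 1 - f (x + 1) q₁ 0 :=
  antitone_nat_of_succ_le fun x => by linarith [hf.F1 x q₁]

theorem stmt_18 (f : ℕ → ℕ → Fin 2 → ℝ) (hf : InClassF f) :
    ∀ q₁ x y : ℕ, x ≤ y → f x q₁ 1 ≤ f (x + 1) q₁ 0 → f y q₁ 1 ≤ f (y + 1) q₁ 0 :=
  fun q₁ _ _ hxy hx => by linarith [hf.antitone_marginal q₁ hxy]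
end
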